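/- Let A be an n×n Hermitian matrix, β > 0, and z ∈ ℂⁿ with ‖z‖₂ = 1 a stationary point of f(z) = (1/2) z* A z + (β/2) Σₖ |zₖ|⁴ on the complex unit sphere, with multiplier λ = (1/2) z* A z + β Σₖ |zₖ|⁴, i.e. A z + 2β diag(|z|²) z = 2λ z. If the Hermitian matrix H = A + 2β diag(|z|²) − 2λ I is positive semidefinite, then for every y ∈ ℂⁿ with ‖y‖₂ = 1 we have f(y) ≥ f(z); that is, z is a global minimizer. -/

import Mathlib

/-!
With `D = diag(|z|²)` and `‖y‖ = 1`, positivity of `H` on `y` reads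
`y* A y + 2β ⟨|z|², |y|²⟩ ≥ 2λ`, while the definition of `λ` gives `z* A z = 2λ - 2β ‖z‖₄⁴`.
Subtracting, `2 (f(y) - f(z)) ≥ β ∑ₖ (|yₖ|² - |zₖ|²)² ≥ 0`.
-/

open Matrix Finset
open scoped ComplexOrder

namespace Matrix

variable {ι : Type*} [Fintype ι] [DecidableEq ι]

lemma re_star_dotProduct_diagonal_mulVec (w : ι → ℝ) (y : ι → ℂ) :
    (star y ⬝ᵥ diagonal (fun k => (w k : ℂ)) *ᵥ y).re = ∑ k, w k * ‖y k‖ ^ 2 := by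
  simp only [dotProduct, mulVec_diagonal, Complex.re_sum]
  refine sum_congr rfl fun k _ => ?_
  rw [Pi.star_apply, Complex.star_def, mul_left_comm, Complex.conj_mul']
  norm_cast

lemma re_star_dotProduct_smul_one_mulVec (c : ℝ) (y : ι → ℂ) :
    (star y ⬝ᵥ (c • (1 : Matrix ι ι ℂ)) *ᵥ y).re = c * ∑ k, ‖y k‖ ^ 2 := by
  rw [← Complex.coe_smul, smul_one_eq_diagonal, re_star_dotProduct_diagonal_mulVec, mul_sum]

lemma PosSemidef.le_re_star_dotProduct_mulVec {M : Matrix ι ι ℂ} {c : ℝ}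
    (h : (M - c • (1 : Matrix ι ι ℂ)).PosSemidef) {y : ι → ℂ} (hy : ∑ k, ‖y k‖ ^ 2 = 1) :
    c ≤ (star y ⬝ᵥ M *ᵥ y).re := by
  have hy' := (Complex.nonneg_iff.mp (h.dotProduct_mulVec_nonneg y)).1
  rw [sub_mulVec, dotProduct_sub, Complex.sub_re, re_star_dotProduct_smul_one_mulVec, hy,
    mul_one] at hy'
  simpa using hy'

end Matrix

theorem stmt0 {n : ℕ} (A : Matrix (Fin n) (Fin n) ℂ)
    (β : ℝ) (hβ : 0 < β) (z : Fin n → ℂ)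
    (lam : ℝ)
    (hlam : lam = (1 / 2) * (star z ⬝ᵥ A.mulVec z).re + β * ∑ k, ‖z k‖ ^ 4)
    (hH : (A + (2 * β) • Matrix.diagonal (fun k => ((‖z k‖ ^ 2 : ℝ) : ℂ))
        - (2 * lam) • (1 : Matrix (Fin n) (Fin n) ℂ)).PosSemidef) :
    ∀ y : Fin n → ℂ, ∑ k, ‖y k‖ ^ 2 = 1 →
      (1 / 2) * (star z ⬝ᵥ A.mulVec z).re + (β / 2) * ∑ k, ‖z k‖ ^ 4 ≤
      (1 / 2) * (star y ⬝ᵥ A.mulVec y).re + (β / 2) * ∑ k, ‖y k‖ ^ 4 := by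
  intro y hy
  have hHy := hH.le_re_star_dotProduct_mulVec hy
  rw [add_mulVec, dotProduct_add, Complex.add_re, smul_mulVec, dotProduct_smul, Complex.smul_re,
    re_star_dotProduct_diagonal_mulVec, smul_eq_mul] at hHy
  have hcross : 2 * ∑ k, ‖z k‖ ^ 2 * ‖y k‖ ^ 2 ≤ ∑ k, ‖z k‖ ^ 4 + ∑ k, ‖y k‖ ^ 4 := by
    rw [mul_sum, ← sum_add_distrib]
    refine sum_le_sum fun k _ => ?_
    linarith [two_mul_le_add_sq (‖z k‖ ^ 2) (‖y k‖ ^ 2)]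
  subst hlam
  linarith [mul_le_mul_of_nonneg_left hcross hβ.le]
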